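/- arXiv:2103.04618 — 3 statements merged into one kernel-verified Lean document; each statement's English description precedes it below -/
import Mathlib

section
/- Let $N_c \geq 1$, let $p \in \mathbb{R}^{N_c}$ be a probability vector, and define the DSCE loss $L(p,k) = -\sum_{j=1}^{N_c} p_j \log \widetilde{y}^{(k)}_j$ where $\widetilde{y}^{(k)}$ is the softmax of the one-hot vector at class $k$. Then $\sum_{k=1}^{N_c} L(p,k) = -1 - N_c \log(1/(N_c - 1 + e))$; in particular this sum is a constant independent of $p$. -/
/-! The softmax of every one-hot vector has the same normaliser `S = N - 1 + e`, so the loss at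
label `k` is `log S - p k`; summing over `k` and using `∑ p = 1` leaves `N log S - 1`. -/

open Finset Real

section Softmax

variable {ι : Type*} [Fintype ι]

theorem log_exp_div_sum_exp (v : ι → ℝ) (j : ι) :
    log (exp (v j) / ∑ m, exp (v m)) = v j - log (∑ m, exp (v m)) := by
  have hpos : 0 < ∑ m, exp (v m) := sum_pos (fun m _ => exp_pos (v m)) ⟨j, mem_univ j⟩
  rw [log_div (exp_ne_zero _) hpos.ne', log_exp]

theorem sum_exp_ite_eq [DecidableEq ι] (k : ι) (a : ℝ) :
    ∑ m, exp (if m = k then a else 0) = Fintype.card ι - 1 + exp a := by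
  calc ∑ m, exp (if m = k then a else 0)
      = ∑ m, ((if m = k then exp a - 1 else 0) + 1) := by
        refine sum_congr rfl fun m _ => ?_
        split_ifs <;> simp
    _ = Fintype.card ι - 1 + exp a := by
        rw [sum_add_distrib, sum_ite_eq' univ k, if_pos (mem_univ k)]
        simp only [sum_const, card_univ, nsmul_eq_mul, mul_one]
        ring

theorem sum_mul_ite_sub [DecidableEq ι] {p : ι → ℝ} (hp : ∑ j, p j = 1) (k : ι) (c : ℝ) :
    ∑ j, p j * ((if j = k then 1 else 0) - c) = p k - c := by
  simp [mul_sub, sum_sub_distrib, ← sum_mul, hp]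

end Softmax

theorem dsce_symmetry_general (N : ℕ) (p : Fin N → ℝ)
    (hp_sum : ∑ j, p j = 1) :
    ∑ k, (-(∑ j, p j * Real.log
        (Real.exp (if j = k then (1:ℝ) else 0) / ∑ m, Real.exp (if m = k then (1:ℝ) else 0))))
      = -1 - (N : ℝ) * Real.log (1 / ((N : ℝ) - 1 + Real.exp 1)) := by
  have hloss : ∀ k : Fin N, ∑ j, p j * log (exp (if j = k then (1:ℝ) else 0) /
      ∑ m, exp (if m = k then (1:ℝ) else 0)) = p k - log ((N : ℝ) - 1 + exp 1) := by
    intro k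
    rw [sum_congr rfl fun j _ => congrArg (p j * ·)
        (log_exp_div_sum_exp (fun m => if m = k then (1:ℝ) else 0) j),
      sum_exp_ite_eq, Fintype.card_fin, sum_mul_ite_sub hp_sum]
  simp only [hloss, sum_neg_distrib, sum_sub_distrib, hp_sum, sum_const, card_univ,
    Fintype.card_fin, nsmul_eq_mul, one_div, log_inv]
  ring

/-- Symmetry (noise-tolerance) condition for the DSCE loss: the sum over all labels is
the constant `-1 - N * log(1/(N-1+e))`, independent of the probability vector `p`. -/
theorem dsce_symmetry (N : ℕ) (hN : 1 ≤ N) (p : Fin N → ℝ)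
    (hp_nonneg : ∀ j, 0 ≤ p j) (hp_sum : ∑ j, p j = 1) :
    ∑ k, (-(∑ j, p j * Real.log
        (Real.exp (if j = k then (1:ℝ) else 0) / ∑ m, Real.exp (if m = k then (1:ℝ) else 0))))
      = -1 - (N : ℝ) * Real.log (1 / ((N : ℝ) - 1 + Real.exp 1)) :=
  dsce_symmetry_general N p hp_sum
end

section
/- Let $L(p,k)$ be any loss on probability vectors satisfying the symmetry condition $\sum_{k=1}^{N_c} L(p,k) = Z$ for all $p$, where $Z$ is a constant. Let labels be corrupted by symmetric noise with rate $\eta < (N_c-1)/N_c$: the observed label equals the true label $y$ with probability $1-\eta$ and equals each other label with probability $\eta/(N_c-1)$. Then for every probability vector $p$ and true label $y$, the expected noisy loss satisfies $\mathbb{E}[L(p, \tilde{y})] = (1 - \frac{\eta N_c}{N_c - 1}) L(p, y) + \frac{\eta}{N_c - 1} Z$. -/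
open Finset

theorem one_sub_mul_add_sum_erase_mul {ι : Type*} [Fintype ι] [DecidableEq ι] (ℓ : ι → ℝ) (y : ι)
    (c η : ℝ) :
    (1 - η) * ℓ y + ∑ j ∈ univ.erase y, c * ℓ j = (1 - η - c) * ℓ y + c * ∑ j, ℓ j := by
  rw [← mul_sum, sum_erase_eq_sub (mem_univ y)]
  ring

theorem noisy_risk_affine_general (N : ℕ) (hN : 2 ≤ N)
    (L : (Fin N → ℝ) → Fin N → ℝ) (Z : ℝ)
    (hsym : ∀ p : Fin N → ℝ, (∀ j, 0 ≤ p j) → (∑ j, p j = 1) → ∑ k, L p k = Z)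
    (η : ℝ)
    (p : Fin N → ℝ) (hp_nonneg : ∀ j, 0 ≤ p j) (hp_sum : ∑ j, p j = 1) (y : Fin N) :
    (1 - η) * L p y + ∑ j ∈ Finset.univ.erase y, (η / ((N : ℝ) - 1)) * L p j
      = (1 - η * N / ((N : ℝ) - 1)) * L p y + (η / ((N : ℝ) - 1)) * Z := by
  have hN1 : (N : ℝ) - 1 ≠ 0 := by
    have : (2 : ℝ) ≤ N := by exact_mod_cast hN
    linarith
  have hslope : 1 - η - η / ((N : ℝ) - 1) = 1 - η * N / ((N : ℝ) - 1) := by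
    field_simp
    ring
  rw [one_sub_mul_add_sum_erase_mul, hsym p hp_nonneg hp_sum, hslope]

/-- Under the symmetry condition, the expected loss under symmetric label noise of rate `η`
is an affine transformation of the clean loss. -/
theorem noisy_risk_affine (N : ℕ) (hN : 2 ≤ N)
    (L : (Fin N → ℝ) → Fin N → ℝ) (Z : ℝ)
    (hsym : ∀ p : Fin N → ℝ, (∀ j, 0 ≤ p j) → (∑ j, p j = 1) → ∑ k, L p k = Z)
    (η : ℝ) (hη0 : 0 ≤ η) (hη : η < ((N : ℝ) - 1) / N)
    (p : Fin N → ℝ) (hp_nonneg : ∀ j, 0 ≤ p j) (hp_sum : ∑ j, p j = 1) (y : Fin N) :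
    (1 - η) * L p y + ∑ j ∈ Finset.univ.erase y, (η / ((N : ℝ) - 1)) * L p j
      = (1 - η * N / ((N : ℝ) - 1)) * L p y + (η / ((N : ℝ) - 1)) * Z :=
  noisy_risk_affine_general N hN L Z hsym η p hp_nonneg hp_sum y
end

section
/- Under the hypotheses of the previous statement (symmetric loss with constant $Z$ and symmetric label noise at rate $\eta < (N_c-1)/N_c$), any minimizer of the expected noisy loss $\mathbb{E}[L(p,\tilde{y})]$ over probability vectors $p$ is also a minimizer of the clean loss $L(p, y)$, and conversely. -/
/-! Since the losses of every prediction sum to `Z`, the expected noisy loss is the affine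
function `(1 - η - η/(N-1)) · L(p, y) + (η/(N-1)) · Z` of the clean loss, and its slope is
positive exactly when `η < (N-1)/N`; a positive affine reparametrisation preserves minimizers. -/

open Finset

theorem mul_add_sum_erase_mul_eq {ι : Type*} [Fintype ι] [DecidableEq ι]
    (ℓ : ι → ℝ) (y : ι) (a b : ℝ) :
    b * ℓ y + ∑ j ∈ univ.erase y, a * ℓ j = (b - a) * ℓ y + a * ∑ j, ℓ j := by
  rw [← mul_sum, ← add_sum_erase _ _ (mem_univ y)]
  ring

theorem one_sub_sub_div_sub_one_pos {n η : ℝ} (hn : 1 < n) (hη : η < (n - 1) / n) :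
    0 < 1 - η - η / (n - 1) := by
  have hη' : η * n < n - 1 := (lt_div_iff₀ (by linarith)).mp hη
  have : η / (n - 1) < 1 - η := by
    rw [div_lt_iff₀ (by linarith)]
    nlinarith
  linarith

theorem forall_le_iff_of_eq_mul_add {α : Type*} {S : α → Prop} {f g : α → ℝ} {c d : ℝ}
    (hc : 0 < c) (hfg : ∀ q, S q → f q = c * g q + d) {p : α} (hp : S p) :
    (∀ q, S q → f p ≤ f q) ↔ (∀ q, S q → g p ≤ g q) := by
  refine forall₂_congr fun q hq => ?_
  rw [hfg p hp, hfg q hq, add_le_add_iff_right, mul_le_mul_iff_right₀ hc]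

theorem noise_tolerance_general (N : ℕ) (hN : 2 ≤ N)
    (L : (Fin N → ℝ) → Fin N → ℝ) (Z : ℝ)
    (hsym : ∀ p : Fin N → ℝ, (∀ j, 0 ≤ p j) → (∑ j, p j = 1) → ∑ k, L p k = Z)
    (η : ℝ) (hη : η < ((N : ℝ) - 1) / N) (y : Fin N)
    (p : Fin N → ℝ) (hp_nonneg : ∀ j, 0 ≤ p j) (hp_sum : ∑ j, p j = 1) :
    ((∀ q : Fin N → ℝ, (∀ j, 0 ≤ q j) → (∑ j, q j = 1) →
        (1 - η) * L p y + ∑ j ∈ Finset.univ.erase y, (η / ((N : ℝ) - 1)) * L p j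
          ≤ (1 - η) * L q y + ∑ j ∈ Finset.univ.erase y, (η / ((N : ℝ) - 1)) * L q j)
      ↔ (∀ q : Fin N → ℝ, (∀ j, 0 ≤ q j) → (∑ j, q j = 1) → L p y ≤ L q y)) := by
  have hN1 : (1 : ℝ) < N := by exact_mod_cast hN
  have hslope := one_sub_sub_div_sub_one_pos hN1 hη
  have hnoisy : ∀ q : Fin N → ℝ, ((∀ j, 0 ≤ q j) ∧ ∑ j, q j = 1) →
      (1 - η) * L q y + ∑ j ∈ univ.erase y, (η / ((N : ℝ) - 1)) * L q j
        = (1 - η - η / ((N : ℝ) - 1)) * L q y + η / ((N : ℝ) - 1) * Z := by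
    rintro q ⟨hq_nonneg, hq_sum⟩
    rw [mul_add_sum_erase_mul_eq, hsym q hq_nonneg hq_sum]
  simpa only [and_imp] using
    forall_le_iff_of_eq_mul_add hslope hnoisy ⟨hp_nonneg, hp_sum⟩

/-- Noise tolerance: under the symmetry condition and symmetric label noise of rate
`η < (N-1)/N`, minimizers of the expected noisy loss over probability vectors coincide
with minimizers of the clean loss. -/
theorem noise_tolerance (N : ℕ) (hN : 2 ≤ N)
    (L : (Fin N → ℝ) → Fin N → ℝ) (Z : ℝ)
    (hsym : ∀ p : Fin N → ℝ, (∀ j, 0 ≤ p j) → (∑ j, p j = 1) → ∑ k, L p k = Z)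
    (η : ℝ) (hη0 : 0 ≤ η) (hη : η < ((N : ℝ) - 1) / N) (y : Fin N)
    (p : Fin N → ℝ) (hp_nonneg : ∀ j, 0 ≤ p j) (hp_sum : ∑ j, p j = 1) :
    ((∀ q : Fin N → ℝ, (∀ j, 0 ≤ q j) → (∑ j, q j = 1) →
        (1 - η) * L p y + ∑ j ∈ Finset.univ.erase y, (η / ((N : ℝ) - 1)) * L p j
          ≤ (1 - η) * L q y + ∑ j ∈ Finset.univ.erase y, (η / ((N : ℝ) - 1)) * L q j)
      ↔ (∀ q : Fin N → ℝ, (∀ j, 0 ≤ q j) → (∑ j, q j = 1) → L p y ≤ L q y)) :=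
  noise_tolerance_general N hN L Z hsym η hη y p hp_nonneg hp_sum
end
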